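/- Let Σ be a d×d real symmetric positive semidefinite matrix, Σ̃ a d×d real symmetric positive definite matrix, μ, μ̃ ∈ ℝ^d, and ν a probability measure on ℝ^d with square-integrable identity map, mean μ̃, and covariance matrix Σ̃. Then the quantity ‖μ − μ̃‖² + tr(Σ) + tr(Σ̃) − 2·tr((Σ̃^{1/2}·Σ·Σ̃^{1/2})^{1/2}) is the minimum of ∫ ‖x − y‖² dπ(x,y) over all probability measures π on ℝ^d × ℝ^d with square-integrable coordinates whose second marginal equals ν and whose first marginal has mean μ and covariance matrix Σ; moreover this minimum is attained by the coupling π = (y ↦ (μ + P·(y − μ̃), y))_*ν, where P = Σ̃^{−1/2}·(Σ̃^{1/2}·Σ·Σ̃^{1/2})^{1/2}·Σ̃^{−1/2} is the optimal transport map matrix. -/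

import Mathlib

open MeasureTheory Matrix
open scoped Classical

/-- The unique positive semidefinite square root of a positive semidefinite real matrix
(junk value `0` if the matrix is not positive semidefinite). -/
noncomputable def psdSqrt {d : ℕ} (A : Matrix (Fin d) (Fin d) ℝ) : Matrix (Fin d) (Fin d) ℝ :=
  if h : A.PosSemidef then (open scoped MatrixOrder in CFC.sqrt A) else 0

/-- The optimal transport map matrix `P = Σ̃^{-1/2} (Σ̃^{1/2} Σ Σ̃^{1/2})^{1/2} Σ̃^{-1/2}`. -/
noncomputable def otMap {d : ℕ} (S St : Matrix (Fin d) (Fin d) ℝ) :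
    Matrix (Fin d) (Fin d) ℝ :=
  (psdSqrt St)⁻¹ * psdSqrt (psdSqrt St * S * psdSqrt St) * (psdSqrt St)⁻¹

/-!
Write `Q = Σ̃^{1/2}` and `M = (Q Σ Q)^{1/2}`. Expanding the square, every admissible coupling has
cost `‖μ - μ̃‖² + tr Σ + tr Σ̃ - 2 ∫ ⟪x - μ, y - μ̃⟫ dπ`, so everything reduces to bounding the
cross term by `tr M`. For positive definite `X = R²`, integrating
`2 ⟪u, v⟫ = 2 ⟪R u, R⁻¹ v⟫ ≤ ‖R u‖² + ‖R⁻¹ v‖²` gives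
`2 ∫ ⟪x - μ, y - μ̃⟫ dπ ≤ tr (X Σ) + tr (X⁻¹ Σ̃)`, and `X = Q (M + ε)⁻¹ Q` brings the right-hand
side down to `2 tr M + ε d`. For the affine coupling, `P Σ̃ P = Σ` and `tr (P Σ̃) = tr M`, so its
cross term is exactly `tr M`.
-/

section PsdSqrt

variable {d : ℕ} {A : Matrix (Fin d) (Fin d) ℝ}

open scoped MatrixOrder in
lemma psdSqrt_eq_cfcSqrt (h : A.PosSemidef) : psdSqrt A = CFC.sqrt A := by
  rw [psdSqrt, dif_pos h]

open scoped MatrixOrder in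
lemma posSemidef_psdSqrt (h : A.PosSemidef) : (psdSqrt A).PosSemidef := by
  rw [psdSqrt_eq_cfcSqrt h]
  exact (CFC.sqrt_nonneg A).posSemidef

open scoped MatrixOrder in
lemma psdSqrt_mul_self (h : A.PosSemidef) : psdSqrt A * psdSqrt A = A := by
  rw [psdSqrt_eq_cfcSqrt h]
  exact CFC.sqrt_mul_sqrt_self A h.nonneg

lemma transpose_psdSqrt (h : A.PosSemidef) : (psdSqrt A)ᵀ = psdSqrt A :=
  (posSemidef_psdSqrt h).isHermitian

open scoped MatrixOrder in
lemma posDef_psdSqrt (h : A.PosDef) : (psdSqrt A).PosDef := by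
  rw [psdSqrt_eq_cfcSqrt h.posSemidef]
  exact (IsStrictlyPositive.sqrt A h.isStrictlyPositive).posDef

lemma isUnit_psdSqrt (h : A.PosDef) : IsUnit (psdSqrt A) :=
  (posDef_psdSqrt h).isUnit

end PsdSqrt

lemma Matrix.PosSemidef.trace_mul_nonneg {d : ℕ} {A B : Matrix (Fin d) (Fin d) ℝ}
    (hA : A.PosSemidef) (hB : B.PosSemidef) : 0 ≤ (A * B).trace := by
  have hconj := hA.conjTranspose_mul_mul_same (psdSqrt B)
  rw [(posSemidef_psdSqrt hB).isHermitian.eq] at hconj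
  calc 0 ≤ (psdSqrt B * A * psdSqrt B).trace := hconj.trace_nonneg
    _ = (A * B).trace := by
      rw [trace_mul_cycle, psdSqrt_mul_self hB, trace_mul_comm]

section OtMap

variable {d : ℕ} {S St : Matrix (Fin d) (Fin d) ℝ}

lemma posSemidef_psdSqrt_mul_mul_psdSqrt (hS : S.PosSemidef) (hSt : St.PosSemidef) :
    (psdSqrt St * S * psdSqrt St).PosSemidef := by
  simpa only [(posSemidef_psdSqrt hSt).isHermitian.eq] using
    hS.conjTranspose_mul_mul_same (psdSqrt St)

lemma transpose_otMap (hS : S.PosSemidef) (hSt : St.PosSemidef) :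
    (otMap S St)ᵀ = otMap S St := by
  rw [otMap, transpose_mul, transpose_mul, transpose_nonsing_inv, transpose_psdSqrt hSt,
    transpose_psdSqrt (posSemidef_psdSqrt_mul_mul_psdSqrt hS hSt)]
  simp only [Matrix.mul_assoc]

lemma otMap_mul_mul_otMap (hS : S.PosSemidef) (hSt : St.PosDef) :
    otMap S St * St * otMap S St = S := by
  have hMM := psdSqrt_mul_self (posSemidef_psdSqrt_mul_mul_psdSqrt hS hSt.posSemidef)
  have hQQ := psdSqrt_mul_self hSt.posSemidef
  have hQ := (isUnit_psdSqrt hSt).map detMonoidHom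
  rw [otMap]
  generalize psdSqrt (psdSqrt St * S * psdSqrt St) = M at hMM ⊢
  generalize psdSqrt St = Q at hMM hQQ hQ ⊢
  subst hQQ
  calc Q⁻¹ * M * Q⁻¹ * (Q * Q) * (Q⁻¹ * M * Q⁻¹)
      = Q⁻¹ * (M * (Q⁻¹ * Q) * (Q * Q⁻¹) * M) * Q⁻¹ := by simp only [Matrix.mul_assoc]
    _ = S := by
        rw [Matrix.nonsing_inv_mul _ hQ, Matrix.mul_nonsing_inv _ hQ, Matrix.mul_one,
          Matrix.mul_one, hMM]
        simp only [Matrix.mul_assoc, Matrix.mul_nonsing_inv _ hQ, Matrix.mul_one,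
          Matrix.nonsing_inv_mul_cancel_left _ _ hQ]

lemma trace_otMap_mul (hSt : St.PosDef) :
    (otMap S St * St).trace = (psdSqrt (psdSqrt St * S * psdSqrt St)).trace := by
  have hQQ := psdSqrt_mul_self hSt.posSemidef
  have hQ := (isUnit_psdSqrt hSt).map detMonoidHom
  rw [otMap]
  generalize psdSqrt (psdSqrt St * S * psdSqrt St) = M
  generalize psdSqrt St = Q at hQQ hQ ⊢
  subst hQQ
  rw [Matrix.mul_assoc, Matrix.mul_assoc, Matrix.nonsing_inv_mul_cancel_left _ _ hQ,
    trace_mul_comm, Matrix.mul_nonsing_inv_cancel_right _ _ hQ]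

lemma exists_posDef_trace_mul_add_trace_inv_mul_le (hS : S.PosSemidef) (hSt : St.PosDef)
    {ε : ℝ} (hε : 0 < ε) :
    ∃ X : Matrix (Fin d) (Fin d) ℝ, X.PosDef ∧
      (X * S).trace + (X⁻¹ * St).trace ≤
        2 * (psdSqrt (psdSqrt St * S * psdSqrt St)).trace + ε * d := by
  have hM := posSemidef_psdSqrt (posSemidef_psdSqrt_mul_mul_psdSqrt hS hSt.posSemidef)
  have hMM := psdSqrt_mul_self (posSemidef_psdSqrt_mul_mul_psdSqrt hS hSt.posSemidef)
  have hQQ := psdSqrt_mul_self hSt.posSemidef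
  have hQ := isUnit_psdSqrt hSt
  have hQT := transpose_psdSqrt hSt.posSemidef
  generalize psdSqrt (psdSqrt St * S * psdSqrt St) = M at hM hMM ⊢
  generalize psdSqrt St = Q at hMM hQQ hQ hQT
  subst hQQ
  set Mε := M + ε • 1
  have hMε : Mε.PosDef := PosDef.posSemidef_add hM (PosDef.one.smul hε)
  have hMεdet := (isUnit_iff_isUnit_det Mε).mp hMε.isUnit
  have hQdet := (isUnit_iff_isUnit_det Q).mp hQ
  refine ⟨Q * Mε⁻¹ * Q, ?_, ?_⟩
  · simpa only [conjTranspose_eq_transpose_of_trivial, hQT] using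
      hMε.inv.conjTranspose_mul_mul_same (mulVec_injective_iff_isUnit.mpr hQ)
  have hcancel : Mε⁻¹ * M * M = M - ε • (Mε⁻¹ * M) := by
    have : Mε⁻¹ * (Mε * M) = M := Matrix.nonsing_inv_mul_cancel_left _ _ hMεdet
    rw [Matrix.add_mul, Matrix.smul_mul, Matrix.one_mul, Matrix.mul_add, Matrix.mul_smul] at this
    rw [Matrix.mul_assoc]; exact eq_sub_of_add_eq this
  have hXS : (Q * Mε⁻¹ * Q * S).trace ≤ M.trace := by
    have hcycle : (Q * Mε⁻¹ * Q * S).trace = (Mε⁻¹ * (Q * S * Q)).trace := by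
      simp only [Matrix.mul_assoc]
      rw [trace_mul_comm Q]
      simp only [Matrix.mul_assoc]
    rw [hcycle, ← hMM, ← Matrix.mul_assoc, hcancel, trace_sub, trace_smul]
    exact sub_le_self _ (smul_nonneg hε.le (hMε.inv.posSemidef.trace_mul_nonneg hM))
  have hXinvSt : ((Q * Mε⁻¹ * Q)⁻¹ * (Q * Q)).trace = M.trace + ε * d := by
    rw [Matrix.mul_inv_rev, Matrix.mul_inv_rev, nonsing_inv_nonsing_inv _ hMεdet,
      Matrix.mul_assoc, Matrix.mul_assoc, nonsing_inv_mul_cancel_left _ _ hQdet, trace_mul_comm,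
      Matrix.mul_nonsing_inv_cancel_right _ _ hQdet, trace_add, trace_smul, trace_one,
      Fintype.card_fin, smul_eq_mul]
  linarith

end OtMap

section MeanSquare

variable {α E : Type*} [MeasurableSpace α] {m : Measure α} [NormedAddCommGroup E] {u v : α → E}

lemma MeasureTheory.MemLp.integrable_norm_sq (hu : MemLp u 2 m) :
    Integrable (fun a => ‖u a‖ ^ 2) m :=
  (memLp_two_iff_integrable_sq_norm hu.1).mp hu

variable [InnerProductSpace ℝ E]

lemma MeasureTheory.MemLp.integrable_inner (hu : MemLp u 2 m) (hv : MemLp v 2 m) :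
    Integrable (fun a => inner ℝ (u a) (v a)) m := by
  rw [← memLp_one_iff_integrable]
  exact hu.of_bilin (fun x y => inner ℝ x y) 1 hv (hu.1.inner hv.1)
    (ae_of_all _ fun a => by simpa using nnnorm_inner_le_nnnorm (𝕜 := ℝ) (u a) (v a))

lemma integral_sub_eq_zero_of_integral_eq [CompleteSpace E] [IsProbabilityMeasure m] {μ : E}
    (hu : Integrable u m) (hμ : ∫ a, u a ∂m = μ) : ∫ a, u a - μ ∂m = 0 := by
  rw [integral_sub hu (integrable_const μ), hμ, integral_const, probReal_univ, one_smul, sub_self]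

lemma integral_norm_sub_sq (hu : MemLp u 2 m) (hv : MemLp v 2 m) :
    ∫ a, ‖u a - v a‖ ^ 2 ∂m =
      ∫ a, ‖u a‖ ^ 2 ∂m + ∫ a, ‖v a‖ ^ 2 ∂m - 2 * ∫ a, inner ℝ (u a) (v a) ∂m := by
  have hu2 := hu.integrable_norm_sq
  have hv2 := hv.integrable_norm_sq
  have huv := (hu.integrable_inner hv).const_mul 2
  simp_rw [norm_sub_sq_real]
  rw [integral_add ?_ hv2, integral_sub hu2 huv, integral_const_mul]
  · ring
  · exact hu2.sub huv

lemma integral_norm_add_sq [CompleteSpace E] [IsProbabilityMeasure m] (c : E) (hu : MemLp u 2 m)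
    (hu0 : ∫ a, u a ∂m = 0) :
    ∫ a, ‖c + u a‖ ^ 2 ∂m = ‖c‖ ^ 2 + ∫ a, ‖u a‖ ^ 2 ∂m := by
  have hu1 := hu.integrable one_le_two
  have hu2 := hu.integrable_norm_sq
  have hcu := (hu1.const_inner (𝕜 := ℝ) c).const_mul 2
  simp_rw [norm_add_sq_real]
  rw [integral_add ?_ hu2, integral_add (integrable_const _) hcu, integral_const_mul,
    integral_inner hu1, hu0, inner_zero_right]
  · simp
  · exact (integrable_const _).add hcu

lemma integral_norm_sub_sq_eq [CompleteSpace E] [IsProbabilityMeasure m] {X Y : α → E} {μX μY : E}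
    (hX : MemLp X 2 m) (hY : MemLp Y 2 m) (hμX : ∫ a, X a ∂m = μX) (hμY : ∫ a, Y a ∂m = μY) :
    ∫ a, ‖X a - Y a‖ ^ 2 ∂m = ‖μX - μY‖ ^ 2 + ∫ a, ‖X a - μX‖ ^ 2 ∂m + ∫ a, ‖Y a - μY‖ ^ 2 ∂m
      - 2 * ∫ a, inner ℝ (X a - μX) (Y a - μY) ∂m := by
  have hXc : MemLp (fun a => X a - μX) 2 m := hX.sub (memLp_const μX)
  have hYc : MemLp (fun a => Y a - μY) 2 m := hY.sub (memLp_const μY)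
  have hcentered : ∫ a, (X a - μX) - (Y a - μY) ∂m = 0 := by
    rw [integral_sub (hXc.integrable one_le_two) (hYc.integrable one_le_two),
      integral_sub_eq_zero_of_integral_eq (hX.integrable one_le_two) hμX,
      integral_sub_eq_zero_of_integral_eq (hY.integrable one_le_two) hμY, sub_zero]
  have hsplit (a : α) : X a - Y a = (μX - μY) + ((X a - μX) - (Y a - μY)) := by abel
  simp_rw [hsplit]
  rw [integral_norm_add_sq _ (u := fun a => (X a - μX) - (Y a - μY)) (hXc.sub hYc) hcentered,
    integral_norm_sub_sq hXc hYc]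
  ring

end MeanSquare

section SecondMoments

variable {α : Type*} [MeasurableSpace α] {m : Measure α} {d : ℕ}
  {f g : α → EuclideanSpace ℝ (Fin d)} {Sig S St : Matrix (Fin d) (Fin d) ℝ}

lemma toEuclideanLin_apply_eq_sum (A : Matrix (Fin d) (Fin d) ℝ) (x : EuclideanSpace ℝ (Fin d))
    (i : Fin d) : toEuclideanLin A x i = ∑ k, A i k * x k := by
  simp [ofLp_toLpLin, mulVec, dotProduct]

lemma integral_toEuclideanLin_apply_mul_apply (hg : MemLp g 2 m)
    (hSig : ∀ i j, ∫ a, g a i * g a j ∂m = Sig i j) (A B : Matrix (Fin d) (Fin d) ℝ)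
    (i j : Fin d) :
    ∫ a, toEuclideanLin A (g a) i * toEuclideanLin B (g a) j ∂m = (A * Sig * Bᵀ) i j := by
  have hint (k l : Fin d) : Integrable (fun a => A i k * B j l * (g a k * g a l)) m :=
    ((hg.eval_piLp k).integrable_mul (hg.eval_piLp l)).const_mul _
  simp only [toEuclideanLin_apply_eq_sum, Finset.sum_mul_sum]
  simp_rw [fun a k l => mul_mul_mul_comm (A i k) (g a k) (B j l) (g a l)]
  rw [integral_finsetSum _ fun k _ => integrable_finsetSum _ fun l _ => hint k l]
  simp_rw [integral_finsetSum _ fun l _ => hint _ l, integral_const_mul, hSig, mul_apply,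
    Finset.sum_mul, transpose_apply]
  rw [Finset.sum_comm]
  simp only [mul_right_comm]

lemma MeasureTheory.MemLp.toEuclideanLin {p : ENNReal}
    (hg : MemLp g p m) (A : Matrix (Fin d) (Fin d) ℝ) :
    MemLp (fun a => Matrix.toEuclideanLin A (g a)) p m :=
  (LinearMap.toContinuousLinearMap (Matrix.toEuclideanLin A)).comp_memLp' hg

lemma integral_inner_toEuclideanLin (hg : MemLp g 2 m)
    (hSig : ∀ i j, ∫ a, g a i * g a j ∂m = Sig i j) (A B : Matrix (Fin d) (Fin d) ℝ) :
    ∫ a, inner ℝ (toEuclideanLin A (g a)) (toEuclideanLin B (g a)) ∂m = (A * Sig * Bᵀ).trace := by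
  have hint (i : Fin d) : Integrable
      (fun a => toEuclideanLin A (g a) i * toEuclideanLin B (g a) i) m :=
    ((hg.toEuclideanLin A).eval_piLp i).integrable_mul ((hg.toEuclideanLin B).eval_piLp i)
  simp only [PiLp.inner_apply, RCLike.inner_apply, conj_trivial, mul_comm (toEuclideanLin B _ _)]
  rw [integral_finsetSum _ fun i _ => hint i]
  exact Finset.sum_congr rfl fun i _ => integral_toEuclideanLin_apply_mul_apply hg hSig A B i i

lemma integral_norm_toEuclideanLin_sq (hg : MemLp g 2 m)
    (hSig : ∀ i j, ∫ a, g a i * g a j ∂m = Sig i j) (A : Matrix (Fin d) (Fin d) ℝ) :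
    ∫ a, ‖toEuclideanLin A (g a)‖ ^ 2 ∂m = (A * Sig * Aᵀ).trace := by
  simp_rw [← real_inner_self_eq_norm_sq]
  exact integral_inner_toEuclideanLin hg hSig A A

lemma integral_norm_sq_eq_trace (hg : MemLp g 2 m)
    (hSig : ∀ i j, ∫ a, g a i * g a j ∂m = Sig i j) :
    ∫ a, ‖g a‖ ^ 2 ∂m = Sig.trace := by
  simpa [toLpLin_one] using integral_norm_toEuclideanLin_sq hg hSig 1

lemma inner_toEuclideanLin_toEuclideanLin_inv {R : Matrix (Fin d) (Fin d) ℝ}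
    (hR : R.IsHermitian) (hRu : IsUnit R) (x y : EuclideanSpace ℝ (Fin d)) :
    inner ℝ (toEuclideanLin R x) (toEuclideanLin R⁻¹ y) = inner ℝ x y := by
  have hselfAdjoint : toEuclideanLin R = LinearMap.adjoint (toEuclideanLin R) := by
    rw [← toEuclideanLin_conjTranspose_eq_adjoint, hR.eq]
  rw [hselfAdjoint, LinearMap.adjoint_inner_left, ← LinearMap.comp_apply, ← toLpLin_mul_same,
    mul_nonsing_inv _ ((isUnit_iff_isUnit_det R).mp hRu), toLpLin_one, LinearMap.id_apply]

lemma two_mul_integral_inner_le_trace_add_trace (hf : MemLp f 2 m) (hg : MemLp g 2 m)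
    (hfS : ∀ i j, ∫ a, f a i * f a j ∂m = S i j) (hgSt : ∀ i j, ∫ a, g a i * g a j ∂m = St i j)
    {X : Matrix (Fin d) (Fin d) ℝ} (hX : X.PosDef) :
    2 * ∫ a, inner ℝ (f a) (g a) ∂m ≤ (X * S).trace + (X⁻¹ * St).trace := by
  set R := psdSqrt X
  have hR : R.IsHermitian := (posSemidef_psdSqrt hX.posSemidef).isHermitian
  have hRR : R * R = X := psdSqrt_mul_self hX.posSemidef
  have hRT : Rᵀ = R := transpose_psdSqrt hX.posSemidef
  have hRinvT : (R⁻¹)ᵀ = R⁻¹ := by rw [transpose_nonsing_inv, hRT]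
  have hRf := (hf.toEuclideanLin R).integrable_norm_sq
  have hRg := (hg.toEuclideanLin R⁻¹).integrable_norm_sq
  have hpointwise (a : α) : 2 * inner ℝ (f a) (g a) ≤
      ‖toEuclideanLin R (f a)‖ ^ 2 + ‖toEuclideanLin R⁻¹ (g a)‖ ^ 2 := by
    rw [← inner_toEuclideanLin_toEuclideanLin_inv hR (isUnit_psdSqrt hX)]
    linarith [real_inner_le_norm (toEuclideanLin R (f a)) (toEuclideanLin R⁻¹ (g a)),
      two_mul_le_add_sq ‖toEuclideanLin R (f a)‖ ‖toEuclideanLin R⁻¹ (g a)‖]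
  calc 2 * ∫ a, inner ℝ (f a) (g a) ∂m
      = ∫ a, 2 * inner ℝ (f a) (g a) ∂m := (integral_const_mul _ _).symm
    _ ≤ ∫ a, ‖toEuclideanLin R (f a)‖ ^ 2 + ‖toEuclideanLin R⁻¹ (g a)‖ ^ 2 ∂m :=
      integral_mono ((hf.integrable_inner hg).const_mul 2)
        (hRf.add hRg) hpointwise
    _ = (R * S * Rᵀ).trace + (R⁻¹ * St * R⁻¹ᵀ).trace := by
      rw [integral_add hRf hRg,
        integral_norm_toEuclideanLin_sq hf hfS, integral_norm_toEuclideanLin_sq hg hgSt]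
    _ = (X * S).trace + (X⁻¹ * St).trace := by
      rw [hRT, hRinvT, trace_mul_cycle, hRR, trace_mul_cycle, ← hRR, Matrix.mul_inv_rev]

lemma integral_inner_le_trace_psdSqrt (hS : S.PosSemidef) (hSt : St.PosDef)
    (hf : MemLp f 2 m) (hg : MemLp g 2 m)
    (hfS : ∀ i j, ∫ a, f a i * f a j ∂m = S i j) (hgSt : ∀ i j, ∫ a, g a i * g a j ∂m = St i j) :
    ∫ a, inner ℝ (f a) (g a) ∂m ≤ (psdSqrt (psdSqrt St * S * psdSqrt St)).trace := by
  refine le_of_forall_pos_le_add fun ε hε => ?_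
  have hd : (0 : ℝ) < d + 1 := by positivity
  obtain ⟨X, hX, hXtrace⟩ :=
    exists_posDef_trace_mul_add_trace_inv_mul_le hS hSt (div_pos (mul_pos two_pos hε) hd)
  have hsmall : 2 * ε / (d + 1) * d ≤ 2 * ε := by
    rw [div_mul_eq_mul_div, div_le_iff₀ hd]
    nlinarith
  linarith [two_mul_integral_inner_le_trace_add_trace hf hg hfS hgSt hX]

end SecondMoments



section Coupling

variable {α : Type*} [MeasurableSpace α] {m : Measure α} [IsProbabilityMeasure m] {d : ℕ}
  {S St : Matrix (Fin d) (Fin d) ℝ} {X Y : α → EuclideanSpace ℝ (Fin d)}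
  {μX μY : EuclideanSpace ℝ (Fin d)}

lemma integral_norm_sub_sq_eq_trace (hX : MemLp X 2 m) (hY : MemLp Y 2 m)
    (hμX : ∫ a, X a ∂m = μX) (hμY : ∫ a, Y a ∂m = μY)
    (hXS : ∀ i j, ∫ a, (X a i - μX i) * (X a j - μX j) ∂m = S i j)
    (hYSt : ∀ i j, ∫ a, (Y a i - μY i) * (Y a j - μY j) ∂m = St i j) :
    ∫ a, ‖X a - Y a‖ ^ 2 ∂m = ‖μX - μY‖ ^ 2 + S.trace + St.trace
      - 2 * ∫ a, inner ℝ (X a - μX) (Y a - μY) ∂m := by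
  have hXc : MemLp (fun a => X a - μX) 2 m := hX.sub (memLp_const μX)
  have hYc : MemLp (fun a => Y a - μY) 2 m := hY.sub (memLp_const μY)
  rw [integral_norm_sub_sq_eq hX hY hμX hμY, integral_norm_sq_eq_trace hXc hXS,
    integral_norm_sq_eq_trace hYc hYSt]

lemma le_integral_norm_sub_sq (hS : S.PosSemidef) (hSt : St.PosDef)
    (hX : MemLp X 2 m) (hY : MemLp Y 2 m) (hμX : ∫ a, X a ∂m = μX) (hμY : ∫ a, Y a ∂m = μY)
    (hXS : ∀ i j, ∫ a, (X a i - μX i) * (X a j - μX j) ∂m = S i j)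
    (hYSt : ∀ i j, ∫ a, (Y a i - μY i) * (Y a j - μY j) ∂m = St i j) :
    ‖μX - μY‖ ^ 2 + S.trace + St.trace - 2 * (psdSqrt (psdSqrt St * S * psdSqrt St)).trace ≤
      ∫ a, ‖X a - Y a‖ ^ 2 ∂m := by
  have hXc : MemLp (fun a => X a - μX) 2 m := hX.sub (memLp_const μX)
  have hYc : MemLp (fun a => Y a - μY) 2 m := hY.sub (memLp_const μY)
  rw [integral_norm_sub_sq_eq_trace hX hY hμX hμY hXS hYSt]
  linarith [integral_inner_le_trace_psdSqrt hS hSt hXc hYc hXS hYSt]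

lemma integral_add_toEuclideanLin_sub (hY : MemLp Y 2 m) (hμY : ∫ a, Y a ∂m = μY)
    (μ : EuclideanSpace ℝ (Fin d)) (A : Matrix (Fin d) (Fin d) ℝ) :
    ∫ a, μ + toEuclideanLin A (Y a - μY) ∂m = μ := by
  have hYc : Integrable (fun a => Y a - μY) m :=
    (hY.integrable one_le_two).sub (integrable_const μY)
  let L := LinearMap.toContinuousLinearMap (toEuclideanLin A)
  change ∫ a, μ + L (Y a - μY) ∂m = μ
  rw [integral_add (integrable_const μ) (L.integrable_comp hYc), L.integral_comp_comm hYc,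
    integral_sub_eq_zero_of_integral_eq (hY.integrable one_le_two) hμY, map_zero, integral_const,
    probReal_univ, one_smul, add_zero]

lemma integral_otMap_apply_mul_apply (hS : S.PosSemidef) (hSt : St.PosDef) (hY : MemLp Y 2 m)
    (hYSt : ∀ i j, ∫ a, (Y a i - μY i) * (Y a j - μY j) ∂m = St i j)
    (μ : EuclideanSpace ℝ (Fin d)) (i j : Fin d) :
    ∫ a, ((μ + toEuclideanLin (otMap S St) (Y a - μY)) i - μ i) *
      ((μ + toEuclideanLin (otMap S St) (Y a - μY)) j - μ j) ∂m = S i j := by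
  have hYc : MemLp (fun a => Y a - μY) 2 m := hY.sub (memLp_const μY)
  simp only [PiLp.add_apply, add_sub_cancel_left]
  rw [integral_toEuclideanLin_apply_mul_apply hYc hYSt, transpose_otMap hS hSt.posSemidef,
    otMap_mul_mul_otMap hS hSt]

lemma integral_norm_add_otMap_sub_sq (hS : S.PosSemidef) (hSt : St.PosDef) (hY : MemLp Y 2 m)
    (hμY : ∫ a, Y a ∂m = μY) (hYSt : ∀ i j, ∫ a, (Y a i - μY i) * (Y a j - μY j) ∂m = St i j)
    (μ : EuclideanSpace ℝ (Fin d)) :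
    ∫ a, ‖μ + toEuclideanLin (otMap S St) (Y a - μY) - Y a‖ ^ 2 ∂m =
      ‖μ - μY‖ ^ 2 + S.trace + St.trace - 2 * (psdSqrt (psdSqrt St * S * psdSqrt St)).trace := by
  have hYc : MemLp (fun a => Y a - μY) 2 m := hY.sub (memLp_const μY)
  have hX : MemLp (fun a => μ + toEuclideanLin (otMap S St) (Y a - μY)) 2 m :=
    (memLp_const μ).add (hYc.toEuclideanLin _)
  have hcross := integral_inner_toEuclideanLin hYc hYSt (otMap S St) 1
  simp only [toLpLin_one, LinearMap.id_apply, transpose_one, Matrix.mul_one] at hcross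
  rw [integral_norm_sub_sq_eq_trace hX hY (integral_add_toEuclideanLin_sub hY hμY μ _) hμY
    (integral_otMap_apply_mul_apply hS hSt hY hYSt μ) hYSt]
  simp only [add_sub_cancel_left]
  rw [hcross, trace_otMap_mul hSt]

end Coupling

/-- **Optimality of the affine transport coupling.**
Let `Σ` be positive semidefinite, `Σ̃` positive definite, and `ν` a probability measure on
`ℝ^d` with square-integrable identity, mean `μ̃` and covariance `Σ̃`. Then
`‖μ - μ̃‖² + tr Σ + tr Σ̃ - 2 tr ((Σ̃^{1/2} Σ Σ̃^{1/2})^{1/2})` is the least value of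
`∫ ‖x - y‖² dπ` over all couplings `π` with second marginal `ν` and first marginal of mean
`μ` and covariance `Σ`; the minimum is attained by the coupling
`π = (y ↦ (μ + P (y - μ̃), y))_* ν`, with `P` the optimal transport map matrix. -/
theorem otMap_coupling_isLeast
    {d : ℕ}
    (S St : Matrix (Fin d) (Fin d) ℝ) (hS : S.PosSemidef) (hSt : St.PosDef)
    (μ μt : EuclideanSpace ℝ (Fin d))
    (ν : Measure (EuclideanSpace ℝ (Fin d))) [IsProbabilityMeasure ν]
    (hint : MemLp (fun y => y) 2 ν)
    (hmean : (∫ y, y ∂ν) = μt)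
    (hcov : ∀ i j, (∫ y, (y i - μt i) * (y j - μt j) ∂ν) = St i j) :
    IsLeast
      { c : ℝ | ∃ π : Measure (EuclideanSpace ℝ (Fin d) × EuclideanSpace ℝ (Fin d)),
          IsProbabilityMeasure π ∧
          MemLp (fun q => q.1) 2 π ∧ MemLp (fun q => q.2) 2 π ∧
          π.map Prod.snd = ν ∧
          (∫ q, q.1 ∂π) = μ ∧
          (∀ i j, (∫ q, (q.1 i - μ i) * (q.1 j - μ j) ∂π) = S i j) ∧
          c = ∫ q, ‖q.1 - q.2‖ ^ 2 ∂π }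
      (‖μ - μt‖ ^ 2 + S.trace + St.trace
        - 2 * (psdSqrt (psdSqrt St * S * psdSqrt St)).trace) ∧
    (∫ q, ‖q.1 - q.2‖ ^ 2
        ∂(ν.map (fun y => (μ + Matrix.toEuclideanLin (otMap S St) (y - μt), y)))) =
      ‖μ - μt‖ ^ 2 + S.trace + St.trace
        - 2 * (psdSqrt (psdSqrt St * S * psdSqrt St)).trace := by
  set T : EuclideanSpace ℝ (Fin d) → EuclideanSpace ℝ (Fin d) × EuclideanSpace ℝ (Fin d) :=
    fun y => (μ + toEuclideanLin (otMap S St) (y - μt), y)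
  have hT : Measurable T := by fun_prop
  have hval : ∫ q, ‖q.1 - q.2‖ ^ 2 ∂(ν.map T) =
      ‖μ - μt‖ ^ 2 + S.trace + St.trace - 2 * (psdSqrt (psdSqrt St * S * psdSqrt St)).trace := by
    rw [integral_map hT.aemeasurable (by fun_prop)]
    exact integral_norm_add_otMap_sub_sq hS hSt hint hmean hcov μ
  refine ⟨⟨⟨ν.map T, Measure.isProbabilityMeasure_map hT.aemeasurable, ?_, ?_, ?_, ?_,
    fun i j => ?_, hval.symm⟩, ?_⟩, hval⟩
  · rw [memLp_map_measure_iff (by fun_prop) hT.aemeasurable]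
    exact (memLp_const μ).add ((hint.sub (memLp_const μt)).toEuclideanLin _)
  · rwa [memLp_map_measure_iff (by fun_prop) hT.aemeasurable]
  · rw [Measure.map_map measurable_snd hT]
    exact Measure.map_id
  · rw [integral_map hT.aemeasurable (by fun_prop)]
    exact integral_add_toEuclideanLin_sub hint hmean μ _
  · rw [integral_map hT.aemeasurable (by fun_prop)]
    exact integral_otMap_apply_mul_apply hS hSt hint hcov μ i j
  · rintro c ⟨π, hπ, hfst, hsnd, rfl, hμπ, hSπ, rfl⟩
    rw [integral_map measurable_snd.aemeasurable (by fun_prop)] at hmean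
    have hcovπ (i j : Fin d) :=
      (integral_map measurable_snd.aemeasurable (by fun_prop)).symm.trans (hcov i j)
    exact le_integral_norm_sub_sq hS hSt hfst hsnd hμπ hmean hSπ hcovπ
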